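/- Let f be a symmetric norm on ℝ^n, let ‖·‖_f be the induced unitarily invariant norm on B(H), and suppose ‖·‖_f is submultiplicative, i.e., f(e_1) ≥ 1. Then there exist nonzero A, B ∈ B(H) with ‖AB‖_f = ‖A‖_f · ‖B‖_f if and only if ‖·‖_f is a cross norm, i.e., f(e_1) = 1. -/
import Mathlib


open scoped InnerProductSpace

variable {H : Type*} [NormedAddCommGroup H] [InnerProductSpace ℂ H] [CompleteSpace H]

/-- The `k`-th singular value (1-indexed) of a bounded operator `A`:
`s_k(A) = inf {‖A - X‖ : rank X < k}`. -/
noncomputable def sval (k : ℕ) (A : H →L[ℂ] H) : ℝ :=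
  sInf { r : ℝ | ∃ X : H →L[ℂ] H,
    Module.rank ℂ (LinearMap.range (X : H →ₗ[ℂ] H)) < (k : Cardinal) ∧ r = ‖A - X‖ }

/-- `f : ℝ^n → ℝ` is a symmetric norm: a norm invariant under permutations of the
coordinates and under sign changes of the coordinates. -/
structure IsSymmetricNorm (n : ℕ) (f : (Fin n → ℝ) → ℝ) : Prop where
  triangle : ∀ x y, f (x + y) ≤ f x + f y
  homog : ∀ (t : ℝ) (x), f (t • x) = |t| * f x
  definite : ∀ x, x ≠ 0 → 0 < f x
  perm_invariant : ∀ (σ : Equiv.Perm (Fin n)) (x), f (fun i => x (σ i)) = f x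
  sign_invariant : ∀ (ε : Fin n → ℝ), (∀ i, ε i = 1 ∨ ε i = -1) →
    ∀ x, f (fun i => ε i * x i) = f x

/-- The unitarily invariant norm induced by a symmetric norm `f` on `ℝ^n`:
`‖A‖_f = f (s_1(A), …, s_n(A))`. -/
noncomputable def normf (n : ℕ) (f : (Fin n → ℝ) → ℝ) (A : H →L[ℂ] H) : ℝ :=
  f (fun j : Fin n => sval (j.1 + 1) A)

lemma sval_bddBelow (k : ℕ) (A : H →L[ℂ] H) :
    BddBelow { r : ℝ | ∃ X : H →L[ℂ] H,
      Module.rank ℂ (LinearMap.range (X : H →ₗ[ℂ] H)) < (k : Cardinal) ∧ r = ‖A - X‖ } := by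
  refine ⟨0, fun r hr => ?_⟩
  obtain ⟨X, -, rfl⟩ := hr
  positivity

lemma sval_nonneg (k : ℕ) (A : H →L[ℂ] H) : 0 ≤ sval k A := by
  apply Real.sInf_nonneg
  rintro r ⟨X, -, rfl⟩
  positivity

lemma sval_le (k : ℕ) (A X : H →L[ℂ] H)
    (h : Module.rank ℂ (LinearMap.range (X : H →ₗ[ℂ] H)) < (k : Cardinal)) :
    sval k A ≤ ‖A - X‖ :=
  csInf_le (sval_bddBelow k A) ⟨X, h, rfl⟩

lemma rank_zero_eq_zero (X : H →L[ℂ] H)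
    (h : Module.rank ℂ (LinearMap.range (X : H →ₗ[ℂ] H)) < (1 : Cardinal)) : X = 0 := by
  have h0 : Module.rank ℂ (LinearMap.range (X : H →ₗ[ℂ] H)) = 0 :=
    Cardinal.lt_one_iff_zero.mp h
  have hsub : Subsingleton (LinearMap.range (X : H →ₗ[ℂ] H)) := rank_zero_iff.mp h0
  have hbot : LinearMap.range (X : H →ₗ[ℂ] H) = ⊥ := by
    rw [Submodule.eq_bot_iff]
    intro y hy
    have := Subsingleton.elim (⟨y, hy⟩ : LinearMap.range (X : H →ₗ[ℂ] H)) ⟨0, Submodule.zero_mem _⟩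
    exact congrArg Subtype.val this
  have : (X : H →ₗ[ℂ] H) = 0 := LinearMap.range_eq_bot.mp hbot
  ext x
  exact congrFun (congrArg DFunLike.coe this) x

lemma zero_rank_lt (k : ℕ) (hk : 0 < k) :
    Module.rank ℂ (LinearMap.range ((0 : H →L[ℂ] H) : H →ₗ[ℂ] H)) < (k : Cardinal) := by
  have : ((0 : H →L[ℂ] H) : H →ₗ[ℂ] H) = 0 := rfl
  rw [this, LinearMap.range_zero, rank_bot]
  exact_mod_cast hk

lemma sval_set_nonempty (k : ℕ) (hk : 0 < k) (A : H →L[ℂ] H) :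
    Set.Nonempty { r : ℝ | ∃ X : H →L[ℂ] H,
      Module.rank ℂ (LinearMap.range (X : H →ₗ[ℂ] H)) < (k : Cardinal) ∧ r = ‖A - X‖ } :=
  ⟨‖A‖, 0, zero_rank_lt k hk, by simp⟩

lemma sval_le_norm (k : ℕ) (hk : 0 < k) (A : H →L[ℂ] H) : sval k A ≤ ‖A‖ := by
  have := sval_le k A 0 (zero_rank_lt k hk)
  simpa using this

lemma norm_le_sval_one (A : H →L[ℂ] H) : ‖A‖ ≤ sval 1 A := by
  apply le_csInf (sval_set_nonempty 1 one_pos A)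
  rintro r ⟨X, hX, rfl⟩
  rw [rank_zero_eq_zero X hX]
  simp

lemma sval_one (A : H →L[ℂ] H) : sval 1 A = ‖A‖ :=
  le_antisymm (sval_le_norm 1 one_pos A) (norm_le_sval_one A)

lemma sval_comp_le (k : ℕ) (hk : 0 < k) (A B : H →L[ℂ] H) :
    sval k (A ∘L B) ≤ ‖A‖ * sval k B := by
  rcases eq_or_lt_of_le (norm_nonneg A) with hA | hA
  · have hA0 : A = 0 := norm_eq_zero.mp hA.symm
    have hcomp : A ∘L B = 0 := by rw [hA0]; ext x; simp
    rw [hcomp, ← hA, zero_mul]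
    have h0 := sval_le k (0 : H →L[ℂ] H) 0 (zero_rank_lt k hk)
    simpa using h0
  · apply le_of_forall_pos_le_add
    intro ε hε
    obtain ⟨r, hr, hrlt⟩ := Real.lt_sInf_add_pos (sval_set_nonempty k hk B) (div_pos hε hA)
    obtain ⟨X, hX, rfl⟩ := hr
    have hrank : Module.rank ℂ (LinearMap.range ((A ∘L X : H →L[ℂ] H) : H →ₗ[ℂ] H))
        < (k : Cardinal) := by
      have hco : ((A ∘L X : H →L[ℂ] H) : H →ₗ[ℂ] H)
          = (A : H →ₗ[ℂ] H).comp (X : H →ₗ[ℂ] H) := rfl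
      rw [hco, LinearMap.range_comp]
      exact lt_of_le_of_lt (rank_map_le _ _) hX
    have h1 : sval k (A ∘L B) ≤ ‖A ∘L B - A ∘L X‖ := sval_le k _ _ hrank
    have h2 : ‖A ∘L B - A ∘L X‖ ≤ ‖A‖ * ‖B - X‖ := by
      have : A ∘L B - A ∘L X = A ∘L (B - X) := by ext x; simp
      rw [this]
      exact ContinuousLinearMap.opNorm_comp_le A (B - X)
    have h3 : ‖A‖ * ‖B - X‖ ≤ ‖A‖ * (sval k B + ε / ‖A‖) :=
      mul_le_mul_of_nonneg_left (le_of_lt hrlt) (le_of_lt hA)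
    have h4 : ‖A‖ * (sval k B + ε / ‖A‖) = ‖A‖ * sval k B + ε := by
      field_simp
    linarith

lemma f_mono_single {n : ℕ} {f : (Fin n → ℝ) → ℝ} (hf : IsSymmetricNorm n f)
    (a : Fin n) (u v : Fin n → ℝ) (hne : ∀ i, i ≠ a → u i = v i) (ha : |u a| ≤ |v a|) :
    f u ≤ f v := by
  by_cases hva : v a = 0
  · have hua : u a = 0 := by
      rw [hva] at ha; simpa using abs_nonpos_iff.mp (by simpa using ha)
    have : u = v := by
      funext i
      by_cases h : i = a
      · subst h; rw [hua, hva]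
      · exact hne i h
    rw [this]
  · set t := u a / v a with ht_def
    have habs : |t| ≤ 1 := by
      rw [ht_def, abs_div]
      exact div_le_one_of_le₀ ha (abs_nonneg _)
    obtain ⟨ht1, ht2⟩ := abs_le.mp habs
    set p := (1 + t) / 2 with hp_def
    set q := (1 - t) / 2 with hq_def
    have hp : 0 ≤ p := by rw [hp_def]; linarith
    have hq : 0 ≤ q := by rw [hq_def]; linarith
    have hpq : p + q = 1 := by rw [hp_def, hq_def]; ring
    set v' := fun i => (if i = a then (-1 : ℝ) else 1) * v i with hv'_def
    have hv' : f v' = f v :=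
      hf.sign_invariant _ (fun i => by by_cases h : i = a <;> simp [h]) v
    have huv : u = p • v + q • v' := by
      funext i
      have hvi : v' i = (if i = a then (-1 : ℝ) else 1) * v i := rfl
      show u i = p * v i + q * v' i
      by_cases h : i = a
      · subst h
        rw [if_pos rfl] at hvi
        rw [hvi]
        have hstep : p * v i + q * (-1 * v i) = t * v i := by rw [hp_def, hq_def]; ring
        rw [hstep, ht_def]
        field_simp
      · rw [hvi, if_neg h]
        have hstep : p * v i + q * (1 * v i) = (p + q) * v i := by ring
        rw [hstep, hpq, one_mul]
        exact hne i h
    calc f u = f (p • v + q • v') := by rw [huv]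
      _ ≤ f (p • v) + f (q • v') := hf.triangle _ _
      _ = p * f v + q * f v := by
          rw [hf.homog, hf.homog, abs_of_nonneg hp, abs_of_nonneg hq, hv']
      _ = (p + q) * f v := by ring
      _ = f v := by rw [hpq, one_mul]

lemma f_mono {n : ℕ} {f : (Fin n → ℝ) → ℝ} (hf : IsSymmetricNorm n f)
    (x y : Fin n → ℝ) (h : ∀ i, |x i| ≤ |y i|) : f x ≤ f y := by
  have key : ∀ s : Finset (Fin n), f (fun i => if i ∈ s then x i else y i) ≤ f y := by
    intro s
    induction s using Finset.induction_on with
    | empty => simp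
    | @insert a s ha ih =>
      refine le_trans (f_mono_single hf a _ (fun i => if i ∈ s then x i else y i) ?_ ?_) ih
      · intro i hi
        simp [Finset.mem_insert, hi]
      · simp only [Finset.mem_insert, true_or, if_pos, if_neg ha]
        simpa using h a
  have := key Finset.univ
  simpa using this

theorem stmt8 (n : ℕ) (hn : 0 < n) (hdim : (n : Cardinal) ≤ Module.rank ℂ H)
    (f : (Fin n → ℝ) → ℝ) (hf : IsSymmetricNorm n f)
    (hsub : 1 ≤ f (Pi.single (⟨0, hn⟩ : Fin n) 1 : Fin n → ℝ)) :
    (∃ A B : H →L[ℂ] H, A ≠ 0 ∧ B ≠ 0 ∧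
        normf n f (A ∘L B) = normf n f A * normf n f B) ↔
      f (Pi.single (⟨0, hn⟩ : Fin n) 1 : Fin n → ℝ) = 1 := by
  constructor
  · rintro ⟨A, B, hA, hB, heq⟩
    have hAn : (0 : ℝ) < ‖A‖ := norm_pos_iff.mpr hA
    have hBn : (0 : ℝ) < ‖B‖ := norm_pos_iff.mpr hB
    have hnormfB : 0 < normf n f B := by
      apply hf.definite
      intro h0
      have := congrFun h0 ⟨0, hn⟩
      simp only [Pi.zero_apply] at this
      rw [show ((⟨0, hn⟩ : Fin n) : ℕ) + 1 = 1 from rfl, sval_one] at this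
      exact hB (norm_eq_zero.mp this)
    -- key1 : ‖AB‖_f ≤ ‖A‖ ⬝ ‖B‖_f
    have key1 : normf n f (A ∘L B) ≤ ‖A‖ * normf n f B := by
      have hm : f (fun j : Fin n => sval (j.1 + 1) (A ∘L B))
          ≤ f (‖A‖ • fun j : Fin n => sval (j.1 + 1) B) := by
        apply f_mono hf
        intro j
        rw [abs_of_nonneg (sval_nonneg _ _)]
        have hr : (0 : ℝ) ≤ ‖A‖ * sval (j.1 + 1) B :=
          mul_nonneg (norm_nonneg _) (sval_nonneg _ _)
        simp only [Pi.smul_apply, smul_eq_mul]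
        rw [abs_of_nonneg hr]
        exact sval_comp_le (j.1 + 1) (Nat.succ_pos _) A B
      rw [hf.homog, abs_of_nonneg (norm_nonneg _)] at hm
      exact hm
    -- key2 : f(e1) ⬝ ‖A‖ ≤ ‖A‖_f
    have key2 : f (Pi.single (⟨0, hn⟩ : Fin n) 1 : Fin n → ℝ) * ‖A‖ ≤ normf n f A := by
      have hm : f (‖A‖ • (Pi.single (⟨0, hn⟩ : Fin n) 1 : Fin n → ℝ))
          ≤ f (fun j : Fin n => sval (j.1 + 1) A) := by
        apply f_mono hf
        intro j
        by_cases hj : j = ⟨0, hn⟩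
        · subst hj
          simp only [Pi.smul_apply, Pi.single_eq_same, smul_eq_mul, mul_one]
          rw [abs_of_nonneg (norm_nonneg _), abs_of_nonneg (sval_nonneg _ _)]
          rw [show ((⟨0, hn⟩ : Fin n) : ℕ) + 1 = 1 from rfl, sval_one]
        · simp only [Pi.smul_apply, Pi.single_eq_of_ne hj, smul_eq_mul, mul_zero]
          simpa using abs_nonneg (sval (j.1 + 1) A)
      rw [hf.homog, abs_of_nonneg (norm_nonneg _)] at hm
      calc f (Pi.single (⟨0, hn⟩ : Fin n) 1 : Fin n → ℝ) * ‖A‖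
          = ‖A‖ * f (Pi.single (⟨0, hn⟩ : Fin n) 1 : Fin n → ℝ) := by ring
        _ ≤ _ := hm
    have h1 : normf n f A ≤ ‖A‖ := by
      rw [heq] at key1
      exact le_of_mul_le_mul_right key1 hnormfB
    have h2 : f (Pi.single (⟨0, hn⟩ : Fin n) 1 : Fin n → ℝ) * ‖A‖ ≤ ‖A‖ := key2.trans h1
    have hle : f (Pi.single (⟨0, hn⟩ : Fin n) 1 : Fin n → ℝ) ≤ 1 := by
      nlinarith
    exact le_antisymm hle hsub
  · intro hc1
    have hnt : Nontrivial H := by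
      rw [← rank_pos_iff_nontrivial (R := ℂ)]
      calc (0 : Cardinal) < n := by exact_mod_cast hn
        _ ≤ _ := hdim
    obtain ⟨x, hx⟩ := exists_ne (0 : H)
    set v := ‖x‖⁻¹ • x with hv_def
    have hv : ‖v‖ = 1 := by
      rw [hv_def, norm_smul, norm_inv, norm_norm]
      exact inv_mul_cancel₀ (norm_ne_zero_iff.mpr hx)
    set P : H →L[ℂ] H := (innerSL ℂ v).smulRight v with hP_def
    have hPapp : ∀ y, P y = ⟪v, y⟫_ℂ • v := fun y => rfl
    have hPnorm : ‖P‖ = 1 := by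
      rw [hP_def, ContinuousLinearMap.norm_smulRight_apply, innerSL_apply_norm, hv, one_mul]
    have hP0 : P ≠ 0 := by
      intro h
      rw [h] at hPnorm
      simp at hPnorm
    have hPP : P ∘L P = P := by
      ext y
      rw [ContinuousLinearMap.comp_apply, hPapp, hPapp, inner_smul_right,
        inner_self_eq_norm_sq_to_K, hv]
      simp
    have hrank : Module.rank ℂ (LinearMap.range ((P : H →ₗ[ℂ] H))) ≤ 1 := by
      have hle : LinearMap.range (P : H →ₗ[ℂ] H) ≤ Submodule.span ℂ {v} := by
        rintro _ ⟨y, rfl⟩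
        show (P y) ∈ _
        rw [hPapp]
        exact Submodule.smul_mem _ _ (Submodule.mem_span_singleton_self v)
      refine (Submodule.rank_mono hle).trans ?_
      simpa using rank_span_le ({v} : Set H)
    have hsvec : (fun j : Fin n => sval (j.1 + 1) P) = (Pi.single (⟨0, hn⟩ : Fin n) 1 : Fin n → ℝ) := by
      funext j
      by_cases hj : j = ⟨0, hn⟩
      · subst hj
        rw [show ((⟨0, hn⟩ : Fin n) : ℕ) + 1 = 1 from rfl, sval_one, hPnorm, Pi.single_eq_same]
      · have hj1 : 1 ≤ j.1 := by
          rcases Nat.eq_zero_or_pos j.1 with h0 | h0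
          · exact absurd (Fin.ext h0) hj
          · exact h0
        have hlt : Module.rank ℂ (LinearMap.range ((P : H →ₗ[ℂ] H))) < ((j.1 + 1 : ℕ) : Cardinal) := by
          refine lt_of_le_of_lt hrank ?_
          exact_mod_cast (by omega : (1 : ℕ) < j.1 + 1)
        have h0 : sval (j.1 + 1) P ≤ 0 := by
          have := sval_le (j.1 + 1) P P hlt
          simpa using this
        rw [Pi.single_eq_of_ne hj]
        exact le_antisymm h0 (sval_nonneg _ _)
    refine ⟨P, P, hP0, hP0, ?_⟩
    unfold normf
    rw [hPP, hsvec, hc1]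
    norm_num
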